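/- arXiv:1901.02778 — 4 statements merged into one kernel-verified Lean document; each statement's English description precedes it below -/
import Mathlib

section
/- For nonnegative reals n₁, e, v, e₁, e₂, v₁, v₂ with n₁ + v + 2v₁ > 0, n₁ + v + 2v₂ > 0, and n₁ + v + v₁ + v₂ > 0, if (n₁ - e - 2e₁)/(n₁ + v + 2v₁) ≥ (n₁ - e - 2e₂)/(n₁ + v + 2v₂), then (n₁ - e - 2e₁)/(n₁ + v + 2v₁) ≥ (n₁ - e - e₁ - e₂)/(n₁ + v + v₁ + v₂). -/
/-!
Writing `a / A` and `b / B` for the efficacies of the two merged solutions, the split solution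
has numerator `(a + b) / 2` and denominator `(A + B) / 2`, so its efficacy is the mediant
`(a + b) / (A + B)`, which never exceeds the larger of `a / A` and `b / B`.
-/

theorem add_div_add_le_div_of_div_le_div {K : Type*} [Field K] [LinearOrder K]
    [IsStrictOrderedRing K] {a b c d : K} (hb : 0 < b) (hd : 0 < d) (h : c / d ≤ a / b) :
    (a + c) / (b + d) ≤ a / b := by
  rw [div_le_div_iff₀ hd hb] at h
  rw [div_le_div_iff₀ (add_pos hb hd) hb]
  linarith

theorem merge_rows_not_worse_general (n₁ e v e₁ e₂ v₁ v₂ : ℝ)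
    (hd₁ : 0 < n₁ + v + 2*v₁) (hd₂ : 0 < n₁ + v + 2*v₂)
    (h : (n₁ - e - 2*e₁)/(n₁ + v + 2*v₁) ≥ (n₁ - e - 2*e₂)/(n₁ + v + 2*v₂)) :
    (n₁ - e - 2*e₁)/(n₁ + v + 2*v₁) ≥ (n₁ - e - e₁ - e₂)/(n₁ + v + v₁ + v₂) := by
  have split_eq_mediant : (n₁ - e - e₁ - e₂)/(n₁ + v + v₁ + v₂) =
      ((n₁ - e - 2*e₁) + (n₁ - e - 2*e₂)) / ((n₁ + v + 2*v₁) + (n₁ + v + 2*v₂)) := by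
    rw [← mul_div_mul_left _ (n₁ + v + v₁ + v₂) two_ne_zero]
    ring_nf
  rw [split_eq_mediant]
  exact add_div_add_le_div_of_div_le_div hd₁ hd₂ h

theorem merge_rows_not_worse (n₁ e v e₁ e₂ v₁ v₂ : ℝ)
    (hn₁ : 0 ≤ n₁) (he : 0 ≤ e) (hv : 0 ≤ v) (he₁ : 0 ≤ e₁) (he₂ : 0 ≤ e₂)
    (hv₁ : 0 ≤ v₁) (hv₂ : 0 ≤ v₂)
    (hd₁ : 0 < n₁ + v + 2*v₁) (hd₂ : 0 < n₁ + v + 2*v₂)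
    (hd₃ : 0 < n₁ + v + v₁ + v₂)
    (h : (n₁ - e - 2*e₁)/(n₁ + v + 2*v₁) ≥ (n₁ - e - 2*e₂)/(n₁ + v + 2*v₂)) :
    (n₁ - e - 2*e₁)/(n₁ + v + 2*v₁) ≥ (n₁ - e - e₁ - e₂)/(n₁ + v + v₁ + v₂) :=
  merge_rows_not_worse_general n₁ e v e₁ e₂ v₁ v₂ hd₁ hd₂ h
end

section
/- Let m, p, n₁ be positive integers, let ñ₁ = n₁ + (mp)². Let e, v, e', v' be natural numbers with e + v ≤ mp, e' + v' ≤ mp, v ≤ mp, v' ≤ mp. If e' + v' < e + v then (ñ₁ - e')/(ñ₁ + v') > (ñ₁ - e)/(ñ₁ + v) (as rational numbers). -/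
/-!
Clearing denominators, `(ñ - e')/(ñ + v') > (ñ - e)/(ñ + v)` becomes
`ñ * ((e + v) - (e' + v')) > e' * v - e * v'`. The left side is at least `ñ`, since the linear
objective drops by at least one, while the right side is at most `e' * v < (m p)²`, since
`e' < e + v ≤ m p` and `v ≤ m p`. Padding the matrix with `(m p)²` ones makes `ñ` exceed that.
-/

/-- The grouping efficacy `(n - e) / (n + v)` of a solution with `e` exceptions and `v` voids in a
matrix with `n` ones. -/
def groupingEfficacy {α : Type*} [Field α] (n e v : α) : α := (n - e) / (n + v)

theorem groupingEfficacy_lt_groupingEfficacy {α : Type*} [Field α] [LinearOrder α]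
    [IsStrictOrderedRing α] {n e v e' v' : α} (he : 0 ≤ e) (he' : 0 ≤ e') (hv : 0 ≤ v)
    (hv' : 0 ≤ v') (hn : e' * v < n) (hgap : e' + v' + 1 ≤ e + v) :
    groupingEfficacy n e v < groupingEfficacy n e' v' := by
  have hn_pos : 0 < n := (mul_nonneg he' hv).trans_lt hn
  unfold groupingEfficacy
  rw [div_lt_div_iff₀ (by positivity) (by positivity)]
  nlinarith [mul_le_mul_of_nonneg_left hgap hn_pos.le, mul_nonneg he hv']

theorem efficacy_strict_mono_general (m p n₁ : ℕ)
    (e v e' v' : ℕ) (hev : e + v ≤ m*p)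
    (h : e' + v' < e + v) :
    ((n₁ + (m*p)^2 - e' : ℚ)) / ((n₁ + (m*p)^2 + v' : ℚ)) >
      ((n₁ + (m*p)^2 - e : ℚ)) / ((n₁ + (m*p)^2 + v : ℚ)) := by
  have hprod : e' * v < (m * p) ^ 2 :=
    calc e' * v ≤ e' * (m * p) := Nat.mul_le_mul_left _ (by omega)
      _ < (m * p) * (m * p) := Nat.mul_lt_mul_of_pos_right (by omega) (by omega)
      _ = (m * p) ^ 2 := (sq _).symm
  have hn : (e' * v : ℚ) < n₁ + (m * p) ^ 2 := by
    exact_mod_cast hprod.trans_le (Nat.le_add_left _ n₁)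
  exact groupingEfficacy_lt_groupingEfficacy (by positivity) (by positivity) (by positivity)
    (by positivity) hn (by exact_mod_cast h)

theorem efficacy_strict_mono (m p n₁ : ℕ) (hm : 0 < m) (hp : 0 < p) (hn₁ : 0 < n₁)
    (e v e' v' : ℕ) (hev : e + v ≤ m*p) (hev' : e' + v' ≤ m*p)
    (hv : v ≤ m*p) (hv' : v' ≤ m*p)
    (h : e' + v' < e + v) :
    ((n₁ + (m*p)^2 - e' : ℚ)) / ((n₁ + (m*p)^2 + v' : ℚ)) >
      ((n₁ + (m*p)^2 - e : ℚ)) / ((n₁ + (m*p)^2 + v : ℚ)) :=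
  efficacy_strict_mono_general m p n₁ e v e' v' hev h
end

section
/- Let m, p be positive integers, n₁ ≥ 1, ñ₁ = n₁ + (mp)², and let c be an integer with 0 ≤ c < mp. Let e, v be natural numbers with v ≤ mp. If (ñ₁ - e)/(ñ₁ + v) ≥ 1 - c/ñ₁ (as rationals) then e + v ≤ c. -/
/-!
Write `N = n₁ + (mp)²`. Clearing denominators in `(N - e)/(N + v) ≥ (N - c)/N` gives
`N (e + v - c) ≤ c v`, and `c v < (mp)² ≤ N` because `c < mp` and `v ≤ mp`.
Hence the integer `e + v - c` is less than `1`.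
-/

lemma mul_add_sub_le_mul_of_one_sub_div_le {K : Type*} [Field K] [LinearOrder K]
    [IsStrictOrderedRing K] {N c e v : K} (hN : 0 < N) (hv : 0 ≤ v)
    (h : 1 - c / N ≤ (N - e) / (N + v)) :
    N * (e + v - c) ≤ c * v := by
  rw [le_div_iff₀ (by positivity), one_sub_div hN.ne', div_mul_eq_mul_div,
    div_le_iff₀ hN] at h
  linarith

lemma mul_lt_sq_of_lt_of_le {R : Type*} [Semiring R] [PartialOrder R] [IsStrictOrderedRing R]
    {c v a : R} (hc0 : 0 ≤ c) (hc : c < a) (hv : v ≤ a) : c * v < a ^ 2 := by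
  rw [sq]
  exact mul_lt_mul_of_lt_of_le_of_nonneg_of_pos hc hv hc0 (hc0.trans_lt hc)

lemma le_zero_of_mul_le_of_lt {x y N : ℤ} (hN : 0 ≤ N) (hxN : N * x ≤ y) (hyN : y < N) :
    x ≤ 0 := by
  by_contra! hx
  nlinarith

theorem reduction_backward_general (m p n₁ : ℕ)
    (c : ℤ) (hc0 : 0 ≤ c) (hc : c < m*p)
    (e v : ℕ) (hv : v ≤ m*p)
    (h : ((n₁ + (m*p)^2 - e : ℚ)) / ((n₁ + (m*p)^2 + v : ℚ)) ≥
      1 - (c : ℚ) / (n₁ + (m*p)^2 : ℚ)) :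
    (e : ℤ) + v ≤ c := by
  set N : ℤ := n₁ + (m * p) ^ 2 with hN_def
  have hcv : c * v < N :=
    (mul_lt_sq_of_lt_of_le hc0 hc (by exact_mod_cast hv)).trans_le
      (le_add_of_nonneg_left (Nat.cast_nonneg n₁))
  have hN : 0 < N := (mul_nonneg hc0 (Nat.cast_nonneg v)).trans_lt hcv
  have key : N * ((e : ℤ) + v - c) ≤ c * v := by
    have hQ := mul_add_sub_le_mul_of_one_sub_div_le (N := (N : ℚ)) (c := c) (e := e)
      (by exact_mod_cast hN) (Nat.cast_nonneg v) (by push_cast [hN_def]; exact h)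
    exact_mod_cast hQ
  linarith [le_zero_of_mul_le_of_lt hN.le key hcv]

theorem reduction_backward (m p n₁ : ℕ) (hm : 0 < m) (hp : 0 < p) (hn₁ : 1 ≤ n₁)
    (c : ℤ) (hc0 : 0 ≤ c) (hc : c < m*p)
    (e v : ℕ) (hv : v ≤ m*p)
    (h : ((n₁ + (m*p)^2 - e : ℚ)) / ((n₁ + (m*p)^2 + v : ℚ)) ≥
      1 - (c : ℚ) / (n₁ + (m*p)^2 : ℚ)) :
    (e : ℤ) + v ≤ c :=
  reduction_backward_general m p n₁ c hc0 hc e v hv h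
end

section
/- Let m, p, n₁ be positive integers, ñ₁ = n₁ + (mp)², and c an integer with 0 ≤ c < mp. For all natural numbers e, v with v ≤ mp and e + v ≤ mp: e + v ≤ c if and only if (ñ₁ - e)/(ñ₁ + v) ≥ 1 - c/ñ₁ (as rationals). -/
/-!
Clearing denominators, `(ñ₁ - e)/(ñ₁ + v) ≥ 1 - c/ñ₁` becomes `ñ₁ (e + v - c) ≤ c v`. Since
`0 ≤ c v < (mp)² ≤ ñ₁`, the integer `e + v - c` cannot be positive, so this holds exactly when
`e + v ≤ c`: the padding `(mp)²` makes a single unit of excess cost more than `c v` can repay.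
-/

theorem one_sub_div_le_div_iff {K : Type*} [Field K] [LinearOrder K] [IsStrictOrderedRing K]
    {N e v c : K} (hN : 0 < N) (hNv : 0 < N + v) :
    1 - c / N ≤ (N - e) / (N + v) ↔ N * (e + v - c) ≤ c * v := by
  rw [one_sub_div hN.ne', div_le_div_iff₀ hN hNv]
  constructor <;> intro h <;> linarith

theorem Int.nonpos_iff_mul_le {R : Type*} [Ring R] [LinearOrder R] [IsStrictOrderedRing R]
    {k : ℤ} {N x : R} (hx : 0 ≤ x) (hxN : x < N) : k ≤ 0 ↔ N * k ≤ x := by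
  constructor
  · intro hk
    exact (mul_nonpos_of_nonneg_of_nonpos (hx.trans hxN.le) (Int.cast_nonpos.mpr hk)).trans hx
  · intro h
    by_contra! hk
    have : N ≤ N * k := le_mul_of_one_le_right (hx.trans hxN.le) (by exact_mod_cast hk)
    exact lt_irrefl x (hxN.trans_le (this.trans h))

theorem reduction_equivalence_general (m p n₁ : ℕ)
    (c : ℤ) (hc0 : 0 ≤ c) (hc : c < m*p) :
    ∀ e v : ℕ, v ≤ m*p → e + v ≤ m*p →
      ((e : ℤ) + v ≤ c ↔
        ((n₁ + (m*p)^2 - e : ℚ)) / ((n₁ + (m*p)^2 + v : ℚ)) ≥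
          1 - (c : ℚ) / (n₁ + (m*p)^2 : ℚ)) := by
  intro e v hv _
  set N : ℚ := n₁ + (m * p) ^ 2
  have hmp : (0 : ℚ) < m * p := by exact_mod_cast hc0.trans_lt hc
  have hN : 0 < N := by positivity
  have hcv : (c : ℚ) * v < N :=
    calc (c : ℚ) * v ≤ c * (m * p) := by gcongr; exact_mod_cast hv
      _ < (m * p) * (m * p) := by gcongr; exact_mod_cast hc
      _ ≤ N := by simp only [N, ← sq]; linarith [(n₁.cast_nonneg : (0 : ℚ) ≤ n₁)]
  rw [ge_iff_le, one_sub_div_le_div_iff hN (by positivity), ← sub_nonpos,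
    Int.nonpos_iff_mul_le (by positivity) hcv]
  push_cast
  rfl

theorem reduction_equivalence (m p n₁ : ℕ) (hm : 0 < m) (hp : 0 < p) (hn₁ : 0 < n₁)
    (c : ℤ) (hc0 : 0 ≤ c) (hc : c < m*p) :
    ∀ e v : ℕ, v ≤ m*p → e + v ≤ m*p →
      ((e : ℤ) + v ≤ c ↔
        ((n₁ + (m*p)^2 - e : ℚ)) / ((n₁ + (m*p)^2 + v : ℚ)) ≥
          1 - (c : ℚ) / (n₁ + (m*p)^2 : ℚ)) :=
  reduction_equivalence_general m p n₁ c hc0 hc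
end
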